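/- Correctness of semantic arithmetic decoding: if c lies in the final coding interval [L_m, H_m) of the sequence (r_1,...,r_m), then for each step i, (c - L_{i-1})/R_{i-1} ∈ [Σ_{k<r_i} q_{i,k}, Σ_{k≤r_i} q_{i,k}), so the decoder recovers r_i at every step. -/

import Mathlib

open Real Finset

/-- Lower endpoint of the arithmetic-coding interval after `m` steps, where at step `i`
the set of index `r i` is chosen among `K` synonymous sets with probabilities `q i`. -/
noncomputable def acL {K : ℕ} (q : ℕ → Fin K → ℝ) (r : ℕ → Fin K) : ℕ → ℝ
  | 0 => 0
  | i + 1 => acL q r i +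
      (∏ j ∈ Finset.range i, q j (r j)) * ∑ k ∈ Finset.univ.filter (fun k => k < r i), q i k

/-- Upper endpoint of the arithmetic-coding interval after `m` steps. -/
noncomputable def acH {K : ℕ} (q : ℕ → Fin K → ℝ) (r : ℕ → Fin K) (m : ℕ) : ℝ :=
  acL q r m + ∏ j ∈ Finset.range m, q j (r j)

/-!
The decoder's test at step `i` says exactly that `c` lies in the subinterval
`[L_{i+1}, H_{i+1})` that the encoder selected at that step, rescaled by `R_i > 0`.
The coding intervals are nested, because the cumulative probabilities up to `r_i` are at
most `1`, so the final interval `[L_m, H_m)` lies inside each of them.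
-/

theorem sub_div_mem_Ico_of_mem_Ico {𝕜 : Type*} [Field 𝕜] [LinearOrder 𝕜]
    [IsStrictOrderedRing 𝕜] {L R a b c : 𝕜} (hR : 0 < R)
    (hc : c ∈ Set.Ico (L + R * a) (L + R * b)) : (c - L) / R ∈ Set.Ico a b := by
  obtain ⟨hlo, hhi⟩ := hc
  constructor
  · rw [le_div_iff₀ hR]; linarith
  · rw [div_lt_iff₀ hR]; linarith

theorem Fintype.sum_filter_le_eq_sum_filter_lt_add {α M : Type*} [Fintype α] [LinearOrder α]
    [LocallyFiniteOrderBot α] [AddCommMonoid M] (f : α → M) (a : α) :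
    ∑ k ∈ univ.filter (· ≤ a), f k = ∑ k ∈ univ.filter (· < a), f k + f a := by
  rw [filter_ge_eq_Iic, filter_gt_eq_Iio, Iic_eq_cons_Iio, sum_cons, add_comm]

section CodingInterval

variable {K : ℕ} (q : ℕ → Fin K → ℝ) (r : ℕ → Fin K)

theorem acL_succ (i : ℕ) :
    acL q r (i + 1) = acL q r i +
      (∏ j ∈ range i, q j (r j)) * ∑ k ∈ univ.filter (· < r i), q i k :=
  rfl

theorem acH_succ (i : ℕ) :
    acH q r (i + 1) = acL q r i +
      (∏ j ∈ range i, q j (r j)) * ∑ k ∈ univ.filter (· ≤ r i), q i k := by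
  rw [acH, acL_succ, prod_range_succ, Fintype.sum_filter_le_eq_sum_filter_lt_add]
  ring

variable {q}

theorem Ico_acL_acH_succ_subset (hq0 : ∀ i k, 0 ≤ q i k) (hsum : ∀ i, ∑ k, q i k ≤ 1)
    (i : ℕ) : Set.Ico (acL q r (i + 1)) (acH q r (i + 1)) ⊆ Set.Ico (acL q r i) (acH q r i) := by
  have hR : 0 ≤ ∏ j ∈ range i, q j (r j) := prod_nonneg fun j _ => hq0 j (r j)
  have hlt : 0 ≤ ∑ k ∈ univ.filter (· < r i), q i k := sum_nonneg fun k _ => hq0 i k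
  have hle : ∑ k ∈ univ.filter (· ≤ r i), q i k ≤ 1 :=
    (sum_le_sum_of_subset_of_nonneg (filter_subset _ _) fun k _ _ => hq0 i k).trans (hsum i)
  apply Set.Ico_subset_Ico
  · rw [acL_succ]
    exact le_add_of_nonneg_right (mul_nonneg hR hlt)
  · rw [acH_succ, acH]
    gcongr
    exact mul_le_of_le_one_right hR hle

theorem antitone_Ico_acL_acH (hq0 : ∀ i k, 0 ≤ q i k) (hsum : ∀ i, ∑ k, q i k ≤ 1) :
    Antitone fun i => Set.Ico (acL q r i) (acH q r i) :=
  antitone_nat_of_succ_le (Ico_acL_acH_succ_subset r hq0 hsum)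

end CodingInterval

/-- Correctness of semantic arithmetic decoding: any `c` in the final coding interval
determines the chosen synonymous set at every step. -/
theorem ac_decoding_correct
    {K : ℕ} (q : ℕ → Fin K → ℝ) (r : ℕ → Fin K) (m : ℕ)
    (hq0 : ∀ i k, 0 ≤ q i k) (hsum : ∀ i, ∑ k, q i k = 1)
    (hr : ∀ i, 0 < q i (r i))
    (c : ℝ) (hc : c ∈ Set.Ico (acL q r m) (acH q r m)) :
    ∀ i < m,
      (c - acL q r i) / (∏ j ∈ Finset.range i, q j (r j)) ∈
        Set.Ico (∑ k ∈ Finset.univ.filter (fun k => k < r i), q i k)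
                (∑ k ∈ Finset.univ.filter (fun k => k ≤ r i), q i k) := by
  intro i hi
  have hstep : c ∈ Set.Ico (acL q r (i + 1)) (acH q r (i + 1)) :=
    antitone_Ico_acL_acH r hq0 (fun i => (hsum i).le) hi hc
  rw [acH_succ, acL_succ] at hstep
  exact sub_div_mem_Ico_of_mem_Ico (prod_pos fun j _ => hr j) hstep
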